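/- arXiv:hep-th/9801011 — 2 statements merged into one kernel-verified Lean document; each statement's English description precedes it below -/
import Mathlib

section
/- Consider the group homomorphism Ψ from U(1) × SU(2) × SU(3) to U(2) × U(3) given by Ψ(c, g, h) = (c³·g, c^{−2}·h). Then the image of Ψ is exactly the subgroup S(U(2)×U(3)) = {(A, B) ∈ U(2)×U(3) : det A · det B = 1}. -/
/-!
Scalars are central, so `(c, g, h) ↦ (c ^ a • g, c ^ b • h)` is a homomorphism
`U(1) × SU(m) × SU(n) → U(m) × U(n)` for all exponents; `Ψ` is the case `m = 2, n = 3, a = 3, b = -2`.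
Since `det (c ^ a • g) = c ^ (a * m) * det g`, the determinants of an image pair multiply to
`c ^ (a * m + b * n) = 1`. Conversely, given `(A, B)` with `det A * det B = 1`, pick `c` on the circle
with `c ^ (a * m) = det A` (possible since `Circle.exp` is onto); then `(c, c ^ (-a) • A, c ^ (-b) • B)`
lies in `U(1) × SU(m) × SU(n)` and maps to `(A, B)`.
-/

/-- The special unitary group `SU(n)`, as the subgroup of the unitary group
`Matrix.unitaryGroup n ℂ` consisting of the matrices of determinant `1`. -/
noncomputable def SU (n : Type*) [DecidableEq n] [Fintype n] :
    Subgroup (Matrix.unitaryGroup n ℂ) :=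
  MonoidHom.ker ((Units.map (Matrix.detMonoidHom : Matrix n n ℂ →* ℂ)).comp Unitary.toUnits)

open Matrix (unitaryGroup det_of_mem_unitary)

section

variable (n : Type*) [DecidableEq n] [Fintype n]

noncomputable def detCircle : unitaryGroup n ℂ →* Circle where
  toFun g := ⟨(g : Matrix n n ℂ).det,
    mem_sphere_zero_iff_norm.2 (CStarRing.norm_of_mem_unitary (det_of_mem_unitary g.2))⟩
  map_one' := Circle.ext Matrix.det_one
  map_mul' g h := Circle.ext (Matrix.det_mul g.1 h.1)

@[simp] lemma coe_detCircle (g : unitaryGroup n ℂ) :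
    (detCircle n g : ℂ) = (g : Matrix n n ℂ).det := rfl

lemma SU_eq_ker_detCircle : SU n = (detCircle n).ker := by
  ext g
  rw [SU, MonoidHom.mem_ker, MonoidHom.mem_ker, Units.ext_iff, ← Circle.coe_eq_one]
  rfl

lemma Circle.coe_mem_unitary (c : Circle) : (c : ℂ) ∈ unitary ℂ := by
  rw [Unitary.mem_iff_star_mul_self, Complex.star_def, Complex.conj_mul', Circle.norm_coe]
  norm_num

noncomputable def scalarCircle : Circle →* unitaryGroup n ℂ where
  toFun c := ⟨(c : ℂ) • 1, Unitary.smul_mem_of_mem c.coe_mem_unitary (one_mem _)⟩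
  map_one' := Subtype.ext (one_smul ℂ 1)
  map_mul' c d := Subtype.ext <| by
    change ((c * d : Circle) : ℂ) • (1 : Matrix n n ℂ) = ((c : ℂ) • 1) * ((d : ℂ) • 1)
    rw [smul_mul_smul_comm, mul_one, Circle.coe_mul]

@[simp] lemma coe_scalarCircle (c : Circle) :
    (scalarCircle n c : Matrix n n ℂ) = (c : ℂ) • 1 := rfl

lemma detCircle_scalarCircle (c : Circle) : detCircle n (scalarCircle n c) = c ^ Fintype.card n :=
  Circle.ext <| by simp

lemma commute_scalarCircle (c : Circle) (g : unitaryGroup n ℂ) : Commute (scalarCircle n c) g :=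
  Subtype.ext <| by simp

noncomputable def scalarPowMul (k : ℤ) : Circle × unitaryGroup n ℂ →* unitaryGroup n ℂ :=
  ((scalarCircle n).comp (zpowGroupHom k)).noncommCoprod (MonoidHom.id _)
    fun _ g => commute_scalarCircle n _ g

lemma scalarPowMul_apply (k : ℤ) (x : Circle × unitaryGroup n ℂ) :
    scalarPowMul n k x = scalarCircle n (x.1 ^ k) * x.2 := rfl

lemma coe_scalarPowMul (k : ℤ) (x : Circle × unitaryGroup n ℂ) :
    (scalarPowMul n k x : Matrix n n ℂ) = (x.1 : ℂ) ^ k • (x.2 : Matrix n n ℂ) := by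
  rw [scalarPowMul_apply, Submonoid.coe_mul, coe_scalarCircle, Matrix.smul_mul, one_mul,
    Circle.coe_zpow]

lemma scalarPowMul_scalarPowMul_neg (k : ℤ) (c : Circle) (g : unitaryGroup n ℂ) :
    scalarPowMul n k (c, scalarPowMul n (-k) (c, g)) = g := by
  rw [scalarPowMul_apply, scalarPowMul_apply, ← mul_assoc, ← map_mul, ← zpow_add, add_neg_cancel,
    zpow_zero, map_one, one_mul]

lemma detCircle_scalarPowMul (k : ℤ) (x : Circle × unitaryGroup n ℂ) :
    detCircle n (scalarPowMul n k x) = x.1 ^ (k * Fintype.card n) * detCircle n x.2 := by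
  rw [scalarPowMul_apply, map_mul, detCircle_scalarCircle, ← zpow_natCast, ← _root_.zpow_mul]

end

lemma Circle.exists_zpow_eq {k : ℤ} (hk : k ≠ 0) (z : Circle) : ∃ c : Circle, c ^ k = z :=
  ⟨Circle.exp (Complex.arg z / k), by
    rw [← Circle.exp_intCast_mul, mul_div_cancel₀ _ (Int.cast_ne_zero.2 hk), Circle.exp_arg]⟩

section

variable (m n : Type*) [DecidableEq m] [Fintype m] [DecidableEq n] [Fintype n]

noncomputable def scalarTwist (a b : ℤ) :
    Circle × SU m × SU n →* unitaryGroup m ℂ × unitaryGroup n ℂ :=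
  ((scalarPowMul m a).comp ((MonoidHom.id _).prodMap ((SU m).subtype.comp (.fst _ _)))).prod
    ((scalarPowMul n b).comp ((MonoidHom.id _).prodMap ((SU n).subtype.comp (.snd _ _))))

variable {m n} {a b : ℤ}

lemma detCircle_scalarTwist (x : Circle × SU m × SU n) :
    detCircle m (scalarTwist m n a b x).1 = x.1 ^ (a * Fintype.card m) ∧
      detCircle n (scalarTwist m n a b x).2 = x.1 ^ (b * Fintype.card n) := by
  have hg : detCircle m x.2.1 = 1 := (SU_eq_ker_detCircle m).le x.2.1.2
  have hh : detCircle n x.2.2 = 1 := (SU_eq_ker_detCircle n).le x.2.2.2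
  simp [scalarTwist, detCircle_scalarPowMul, hg, hh]

theorem mem_range_scalarTwist_iff (hab : a * Fintype.card m + b * Fintype.card n = 0)
    (ha : a * Fintype.card m ≠ 0) (y : unitaryGroup m ℂ × unitaryGroup n ℂ) :
    y ∈ (scalarTwist m n a b).range ↔ detCircle m y.1 * detCircle n y.2 = 1 := by
  constructor
  · rintro ⟨x, rfl⟩
    obtain ⟨h₁, h₂⟩ := detCircle_scalarTwist (a := a) (b := b) x
    rw [h₁, h₂, ← zpow_add, hab, zpow_zero]
  · intro hy
    obtain ⟨c, hc⟩ := Circle.exists_zpow_eq ha (detCircle m y.1)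
    have hg : scalarPowMul m (-a) (c, y.1) ∈ SU m := by
      rw [SU_eq_ker_detCircle, MonoidHom.mem_ker, detCircle_scalarPowMul, neg_mul, zpow_neg, hc,
        inv_mul_cancel]
    have hh : scalarPowMul n (-b) (c, y.2) ∈ SU n := by
      rw [SU_eq_ker_detCircle, MonoidHom.mem_ker, detCircle_scalarPowMul, neg_mul,
        eq_neg_of_add_eq_zero_right hab, neg_neg, hc, hy]
    exact ⟨(c, ⟨_, hg⟩, ⟨_, hh⟩),
      Prod.ext (scalarPowMul_scalarPowMul_neg m a c y.1) (scalarPowMul_scalarPowMul_neg n b c y.2)⟩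

end

/-- **Surjectivity half of the additive realization of `G_SM` (Section 5.1).**
There is a group homomorphism `Ψ : U(1) × SU(2) × SU(3) →* U(2) × U(3)`,
`Ψ(c, g, h) = (c³·g, c⁻²·h)`, whose image is exactly the subgroup
`S(U(2)×U(3)) = {(A, B) ∈ U(2)×U(3) : det A · det B = 1}`. -/
theorem range_of_additive_realization :
    ∃ Ψ : (Circle × SU (Fin 2) × SU (Fin 3)) →*
        Matrix.unitaryGroup (Fin 2) ℂ × Matrix.unitaryGroup (Fin 3) ℂ,
      (∀ x : Circle × SU (Fin 2) × SU (Fin 3),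
        ((Ψ x).1 : Matrix (Fin 2) (Fin 2) ℂ) =
          (x.1 : ℂ) ^ (3 : ℤ) •
            ((x.2.1 : Matrix.unitaryGroup (Fin 2) ℂ) : Matrix (Fin 2) (Fin 2) ℂ) ∧
        ((Ψ x).2 : Matrix (Fin 3) (Fin 3) ℂ) =
          (x.1 : ℂ) ^ (-2 : ℤ) •
            ((x.2.2 : Matrix.unitaryGroup (Fin 3) ℂ) : Matrix (Fin 3) (Fin 3) ℂ)) ∧
      (∀ y : Matrix.unitaryGroup (Fin 2) ℂ × Matrix.unitaryGroup (Fin 3) ℂ,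
        y ∈ Ψ.range ↔
          (y.1 : Matrix (Fin 2) (Fin 2) ℂ).det * (y.2 : Matrix (Fin 3) (Fin 3) ℂ).det = 1) := by
  refine ⟨scalarTwist (Fin 2) (Fin 3) 3 (-2), fun x => ⟨coe_scalarPowMul _ _ _,
    coe_scalarPowMul _ _ _⟩, fun y => ?_⟩
  rw [mem_range_scalarTwist_iff (by simp) (by simp), ← Circle.coe_eq_one, Circle.coe_mul,
    coe_detCircle, coe_detCircle]
end

section
/- There is a group isomorphism between the quotient (U(1) × SU(2) × SU(3)) / ⟨(ζ₆, −1₂, ζ₃·1₃)⟩, where ⟨(ζ₆, −1₂, ζ₃·1₃)⟩ is the cyclic subgroup generated by the central element (ζ₂^{-1}·ζ₃^{-1}, ζ₂·1₂, ζ₃·1₃) = (ζ₆, −1₂, ζ₃·1₃), and the group S(U(2)×U(3)) = {(A, B) ∈ U(2)×U(3) : det A · det B = 1}. -/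
/-- `ζ n = exp(2πi/n)`, the standard primitive `n`-th root of unity in `ℂ`. -/
noncomputable def zeta (n : ℕ) : ℂ := Complex.exp (2 * Real.pi * Complex.I / n)

/-- The cyclic subgroup of `U(1) × SU(2) × SU(3)` generated by the central element
`(ζ₂⁻¹·ζ₃⁻¹, ζ₂·1₂, ζ₃·1₃) = (ζ₆, -1₂, ζ₃·1₃)`. -/
noncomputable def N : Subgroup (Circle × SU (Fin 2) × SU (Fin 3)) :=
  Subgroup.closure
    {x | (x.1 : ℂ) = zeta 6 ∧
      ((x.2.1 : Matrix.unitaryGroup (Fin 2) ℂ) : Matrix (Fin 2) (Fin 2) ℂ) =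
        -(1 : Matrix (Fin 2) (Fin 2) ℂ) ∧
      ((x.2.2 : Matrix.unitaryGroup (Fin 3) ℂ) : Matrix (Fin 3) (Fin 3) ℂ) =
        zeta 3 • (1 : Matrix (Fin 3) (Fin 3) ℂ)}

instance : N.Normal := by
  have hle : N ≤ Subgroup.center (Circle × SU (Fin 2) × SU (Fin 3)) := by
    rw [N, Subgroup.closure_le]
    rintro ⟨c, A, B⟩ ⟨-, hA, hB⟩
    rw [SetLike.mem_coe, Subgroup.mem_center_iff]
    rintro ⟨c', A', B'⟩
    refine Prod.ext (mul_comm _ _) (Prod.ext ?_ ?_)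
    · refine Subtype.ext (Subtype.ext ?_)
      show (A' : Matrix.unitaryGroup (Fin 2) ℂ).1 * (A : Matrix.unitaryGroup (Fin 2) ℂ).1 =
        (A : Matrix.unitaryGroup (Fin 2) ℂ).1 * (A' : Matrix.unitaryGroup (Fin 2) ℂ).1
      rw [hA]
      simp
    · refine Subtype.ext (Subtype.ext ?_)
      show (B' : Matrix.unitaryGroup (Fin 3) ℂ).1 * (B : Matrix.unitaryGroup (Fin 3) ℂ).1 =
        (B : Matrix.unitaryGroup (Fin 3) ℂ).1 * (B' : Matrix.unitaryGroup (Fin 3) ℂ).1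
      rw [hB]
      simp [mul_smul_comm, smul_mul_assoc]
  constructor
  intro n hn g
  have hcomm := Subgroup.mem_center_iff.1 (hle hn) g
  rw [hcomm, mul_assoc, mul_inv_cancel, mul_one]
  exact hn

/-- `S(U(2)×U(3))`, the subgroup of `U(2) × U(3)` of pairs `(A, B)` with
`det A · det B = 1`. -/
noncomputable def SU23 :
    Subgroup (Matrix.unitaryGroup (Fin 2) ℂ × Matrix.unitaryGroup (Fin 3) ℂ) where
  carrier := {x | ((x.1 : Matrix (Fin 2) (Fin 2) ℂ).det) *
    ((x.2 : Matrix (Fin 3) (Fin 3) ℂ).det) = 1}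
  one_mem' := by simp
  mul_mem' := by
    intro a b ha hb
    simp only [Set.mem_setOf_eq] at *
    show ((a.1 : Matrix (Fin 2) (Fin 2) ℂ) * (b.1 : Matrix (Fin 2) (Fin 2) ℂ)).det *
      ((a.2 : Matrix (Fin 3) (Fin 3) ℂ) * (b.2 : Matrix (Fin 3) (Fin 3) ℂ)).det = 1
    rw [Matrix.det_mul, Matrix.det_mul, mul_mul_mul_comm, ha, hb, mul_one]
  inv_mem' := by
    intro a ha
    simp only [Set.mem_setOf_eq] at *
    show ((star (a.1 : Matrix (Fin 2) (Fin 2) ℂ)).det) *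
      ((star (a.2 : Matrix (Fin 3) (Fin 3) ℂ)).det) = 1
    rw [Matrix.star_eq_conjTranspose, Matrix.star_eq_conjTranspose, Matrix.det_conjTranspose,
      Matrix.det_conjTranspose, ← star_mul', ha, star_one]

/-!
The homomorphism `(c, g, h) ↦ (c³·g, c⁻²·h)` lands in `S(U(2)×U(3))` because
`det (c³·g) · det (c⁻²·h) = c⁶ · c⁻⁶`. It is onto: given `(A, B)`, pick a sixth root `c` of
`det A` on the circle; then `(c, c⁻³·A, c²·B)` is a preimage. An element of the kernel has
`g = c⁻³·1` and `h = c²·1`, so it is determined by `c`, and `det g = 1` forces `c⁶ = 1`,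
i.e. `c = ζ₆ᵏ`; the `k`-th power of the generator of `N` is then the same kernel element.
-/

open Matrix

lemma zeta_mul_pow (k n : ℕ) (hk : k ≠ 0) : zeta (k * n) ^ k = zeta n := by
  rw [zeta, zeta, ← Complex.exp_nat_mul, Nat.cast_mul, ← mul_div_assoc,
    mul_div_mul_left _ _ (Nat.cast_ne_zero.2 hk)]

lemma zeta_two : zeta 2 = -1 := by
  rw [zeta, Nat.cast_ofNat, mul_div_right_comm, mul_div_cancel_left₀ _ two_ne_zero,
    Complex.exp_pi_mul_I]

lemma isPrimitiveRoot_zeta {n : ℕ} (hn : n ≠ 0) : IsPrimitiveRoot (zeta n) n :=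
  Complex.isPrimitiveRoot_exp n hn

noncomputable def zetaCircle (n : ℕ) : Circle := Circle.exp (2 * Real.pi / n)

@[simp]
lemma coe_zetaCircle (n : ℕ) : (zetaCircle n : ℂ) = zeta n := by
  rw [zetaCircle, Circle.coe_exp, zeta]
  push_cast
  ring_nf

lemma zetaCircle_pow_self {n : ℕ} (hn : n ≠ 0) : zetaCircle n ^ n = 1 := by
  ext
  simpa using (isPrimitiveRoot_zeta hn).pow_eq_one

namespace Circle

lemma coe_mem_unitary_s17 (c : Circle) : (c : ℂ) ∈ unitary ℂ := by
  rw [Unitary.mem_iff_star_mul_self, Complex.star_def, ← coe_inv_eq_conj, ← coe_mul,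
    inv_mul_cancel, coe_one]

lemma exists_pow_eq_of_norm_eq_one {z : ℂ} (hz : ‖z‖ = 1) {n : ℕ} (hn : n ≠ 0) :
    ∃ c : Circle, (c : ℂ) ^ n = z := by
  let w : Circle := ⟨z, mem_sphere_zero_iff_norm.2 hz⟩
  refine ⟨exp (Complex.arg w / n), ?_⟩
  rw [← coe_pow, ← exp_natCast_mul, mul_div_cancel₀ _ (Nat.cast_ne_zero.2 hn), exp_arg]

end Circle

section ScalarUnitary

variable (n : Type*) [DecidableEq n] [Fintype n]

noncomputable def scalarUnitary : Circle →* unitaryGroup n ℂ where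
  toFun c := ⟨(c : ℂ) • 1, Unitary.smul_mem_of_mem c.coe_mem_unitary_s17 (one_mem _)⟩
  map_one' := Subtype.ext (one_smul ℂ 1)
  map_mul' a b := Subtype.ext <|
    show ((a * b : Circle) : ℂ) • (1 : Matrix n n ℂ) = ((a : ℂ) • 1) * ((b : ℂ) • 1) by
      rw [smul_mul_smul_comm, one_mul, Circle.coe_mul]

variable {n}

@[simp]
lemma coe_scalarUnitary (c : Circle) : (scalarUnitary n c : Matrix n n ℂ) = (c : ℂ) • 1 := rfl

lemma commute_scalarUnitary (c : Circle) (A : unitaryGroup n ℂ) :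
    Commute (scalarUnitary n c) A :=
  Subtype.ext (by simp)

lemma coe_scalarUnitary_mul (c : Circle) (A : unitaryGroup n ℂ) :
    ((scalarUnitary n c * A : unitaryGroup n ℂ) : Matrix n n ℂ) =
      (c : ℂ) • (A : Matrix n n ℂ) := by
  rw [Submonoid.coe_mul, coe_scalarUnitary, smul_mul_assoc, one_mul]

lemma det_scalarUnitary_mul (c : Circle) (A : unitaryGroup n ℂ) :
    det ((scalarUnitary n c * A : unitaryGroup n ℂ) : Matrix n n ℂ) =
      (c : ℂ) ^ Fintype.card n * det (A : Matrix n n ℂ) := by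
  rw [coe_scalarUnitary_mul, det_smul]

lemma mem_SU_iff {A : unitaryGroup n ℂ} : A ∈ SU n ↔ det (A : Matrix n n ℂ) = 1 := by
  simp [SU, Units.ext_iff]

lemma scalarUnitary_mem_SU_iff (c : Circle) :
    scalarUnitary n c ∈ SU n ↔ c ^ Fintype.card n = 1 := by
  simp [mem_SU_iff, ← Circle.coe_eq_one]

end ScalarUnitary

noncomputable def standardModelHom :
    Circle × SU (Fin 2) × SU (Fin 3) →* unitaryGroup (Fin 2) ℂ × unitaryGroup (Fin 3) ℂ :=
  MonoidHom.noncommCoprod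
    (((scalarUnitary (Fin 2)).comp (powMonoidHom 3)).prod
      ((scalarUnitary (Fin 3)).comp (zpowGroupHom (-2))))
    ((SU (Fin 2)).subtype.prodMap (SU (Fin 3)).subtype)
    fun _ _ ↦ Commute.prod (commute_scalarUnitary _ _) (commute_scalarUnitary _ _)

lemma standardModelHom_apply (x : Circle × SU (Fin 2) × SU (Fin 3)) :
    standardModelHom x =
      (scalarUnitary _ (x.1 ^ 3) * (x.2.1 : unitaryGroup (Fin 2) ℂ),
        scalarUnitary _ (x.1 ^ (-2 : ℤ)) * (x.2.2 : unitaryGroup (Fin 3) ℂ)) :=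
  rfl

lemma standardModelHom_mem_SU23 (x : Circle × SU (Fin 2) × SU (Fin 3)) :
    standardModelHom x ∈ SU23 := by
  obtain ⟨c, g, h⟩ := x
  change det (_ : Matrix _ _ ℂ) * det (_ : Matrix _ _ ℂ) = 1
  rw [standardModelHom_apply, det_scalarUnitary_mul, det_scalarUnitary_mul, mem_SU_iff.1 g.2,
    mem_SU_iff.1 h.2]
  have hc : ((c ^ 3) ^ 2 * (c ^ (-2 : ℤ)) ^ 3 : Circle) = 1 := by group
  simpa using congrArg ((↑) : Circle → ℂ) hc

noncomputable def standardModelHomSU23 : Circle × SU (Fin 2) × SU (Fin 3) →* SU23 :=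
  standardModelHom.codRestrict SU23 standardModelHom_mem_SU23

lemma standardModelHomSU23_surjective : Function.Surjective standardModelHomSU23 := by
  rintro ⟨⟨A, B⟩, hAB⟩
  change det (A : Matrix (Fin 2) (Fin 2) ℂ) * det (B : Matrix (Fin 3) (Fin 3) ℂ) = 1 at hAB
  obtain ⟨c, hc⟩ := Circle.exists_pow_eq_of_norm_eq_one
    (CStarRing.norm_of_mem_unitary (det_of_mem_unitary A.2)) (n := 6) (by norm_num)
  have hg : scalarUnitary _ (c⁻¹ ^ 3) * A ∈ SU (Fin 2) := by
    rw [mem_SU_iff, det_scalarUnitary_mul, ← hc]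
    simp [← pow_mul]
  have hh : scalarUnitary _ (c ^ 2) * B ∈ SU (Fin 3) := by
    rw [mem_SU_iff, det_scalarUnitary_mul, Fintype.card_fin, Circle.coe_pow, ← pow_mul, hc, hAB]
  refine ⟨(c, ⟨_, hg⟩, ⟨_, hh⟩), Subtype.ext (Prod.ext ?_ ?_)⟩
  · change scalarUnitary _ (c ^ 3) * (scalarUnitary _ (c⁻¹ ^ 3) * A) = A
    rw [← mul_assoc, ← map_mul, inv_pow, mul_inv_cancel, map_one, one_mul]
  · change scalarUnitary _ (c ^ (-2 : ℤ)) * (scalarUnitary _ (c ^ 2) * B) = B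
    rw [← mul_assoc, ← map_mul, _root_.zpow_neg, zpow_ofNat, inv_mul_cancel, map_one, one_mul]

lemma fst_pow_six_of_mem_ker {x : Circle × SU (Fin 2) × SU (Fin 3)}
    (hx : x ∈ standardModelHom.ker) : x.1 ^ 6 = 1 := by
  have h := congrArg (fun y ↦ det (y.1 : Matrix (Fin 2) (Fin 2) ℂ)) hx
  simp only [standardModelHom_apply, det_scalarUnitary_mul, mem_SU_iff.1 x.2.1.2] at h
  ext
  simpa [← pow_mul] using h

lemma eq_of_mem_ker_of_fst_eq {x y : Circle × SU (Fin 2) × SU (Fin 3)}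
    (hx : x ∈ standardModelHom.ker) (hy : y ∈ standardModelHom.ker) (h : x.1 = y.1) :
    x = y := by
  have hxy := (MonoidHom.mem_ker.1 hx).trans (MonoidHom.mem_ker.1 hy).symm
  rw [standardModelHom_apply, standardModelHom_apply, h] at hxy
  obtain ⟨h2, h3⟩ := Prod.ext_iff.1 hxy
  exact Prod.ext h (Prod.ext (Subtype.ext (mul_left_cancel h2)) (Subtype.ext (mul_left_cancel h3)))

noncomputable def centralGenerator : Circle × SU (Fin 2) × SU (Fin 3) :=
  (zetaCircle 6, ⟨scalarUnitary _ (-1), (scalarUnitary_mem_SU_iff _).2 (by simp)⟩,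
    ⟨scalarUnitary _ (zetaCircle 3),
      (scalarUnitary_mem_SU_iff _).2 (by simpa using zetaCircle_pow_self three_ne_zero)⟩)

lemma centralGenerator_mem_N : centralGenerator ∈ N :=
  Subgroup.subset_closure
    ⟨coe_zetaCircle 6, by simp [centralGenerator], by simp [centralGenerator]⟩

lemma N_le_ker_standardModelHom : N ≤ standardModelHom.ker := by
  rw [N, Subgroup.closure_le]
  rintro ⟨c, g, h⟩ ⟨hc, hg, hh⟩
  dsimp only at hc hg hh
  rw [SetLike.mem_coe, MonoidHom.mem_ker, standardModelHom_apply]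
  refine Prod.ext (Subtype.ext ?_) (Subtype.ext ?_)
  · have h63 : zeta 6 ^ 3 = -1 := by simpa [zeta_two] using zeta_mul_pow 3 2 three_ne_zero
    rw [coe_scalarUnitary_mul, hg, Circle.coe_pow, hc, h63, neg_smul, one_smul, neg_neg]
    rfl
  · have h62 : zeta 6 ^ 2 = zeta 3 := by simpa using zeta_mul_pow 2 3 two_ne_zero
    rw [coe_scalarUnitary_mul, hh, Circle.coe_zpow, hc, smul_smul, _root_.zpow_neg, zpow_ofNat,
      h62, inv_mul_cancel₀ ((isPrimitiveRoot_zeta three_ne_zero).ne_zero three_ne_zero), one_smul]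
    rfl

lemma ker_standardModelHom_le_N : standardModelHom.ker ≤ N := by
  intro x hx
  obtain ⟨k, -, hk⟩ := (isPrimitiveRoot_zeta (n := 6) (by norm_num)).eq_pow_of_pow_eq_one
    (congrArg ((↑) : Circle → ℂ) (fst_pow_six_of_mem_ker hx))
  have hgen : centralGenerator ^ k ∈ standardModelHom.ker :=
    pow_mem (N_le_ker_standardModelHom centralGenerator_mem_N) k
  rw [eq_of_mem_ker_of_fst_eq hx hgen (Circle.ext (by simp [centralGenerator, hk]))]
  exact pow_mem centralGenerator_mem_N k

lemma ker_standardModelHomSU23 : standardModelHomSU23.ker = N :=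
  (MonoidHom.ker_codRestrict _ _ _).trans
    (le_antisymm ker_standardModelHom_le_N N_le_ker_standardModelHom)

/-- **Additive realization of the minimal Standard Model group (Section 5.1).**
The quotient of `U(1) × SU(2) × SU(3)` by the cyclic subgroup generated by the central
element `(ζ₂⁻¹·ζ₃⁻¹, ζ₂·1₂, ζ₃·1₃) = (ζ₆, -1₂, ζ₃·1₃)` is isomorphic, as a group, to
`S(U(2)×U(3)) = {(A, B) ∈ U(2)×U(3) : det A · det B = 1}`. -/
theorem GSM_iso_SU23 :
    Nonempty (((Circle × SU (Fin 2) × SU (Fin 3)) ⧸ N) ≃* SU23) :=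
  ⟨(QuotientGroup.quotientMulEquivOfEq ker_standardModelHomSU23.symm).trans
    (QuotientGroup.quotientKerEquivOfSurjective _ standardModelHomSU23_surjective)⟩
end
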